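/- arXiv:0709.0599 — 7 statements merged into one kernel-verified Lean document; each statement's English description precedes it below -/
import Mathlib

section
/- For all x with 0 ≤ x ≤ 1, the binary entropy function satisfies h₂(x) = 1 - (1/(2 ln 2)) ∑_{k=1}^∞ (1-2x)^{2k}/(k(2k-1)). -/
/-!
With `t = 1 - 2x` we have `1 + t = 2(1 - x)` and `1 - t = 2x`, so
`ln 2 · (1 - h₂(x)) = ((1 + t) ln(1 + t) + (1 - t) ln(1 - t)) / 2`. For `|t| < 1` the power
series of this function comes from those of `ln(1 + t) - ln(1 - t)` and `ln(1 - t²)`, using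
`1 / (k (2k - 1)) = 2 / (2k - 1) - 1 / k`. At `t = ±1` (where `log 0 = 0`) the same partial fractions turn the
partial sums into `2 (H_{2n} - H_n)`, which tends to `2 ln 2`.
-/

noncomputable def h2 (x : ℝ) : ℝ := -(x * Real.logb 2 x) - (1 - x) * Real.logb 2 (1 - x)

open Real Filter Finset Topology

lemma one_div_natSucc_mul_two_mul_sub_one (k : ℕ) :
    1 / (((k : ℝ) + 1) * (2 * ((k : ℝ) + 1) - 1)) = 2 / (2 * (k : ℝ) + 1) - 1 / ((k : ℝ) + 1) := by
  rw [div_sub_div _ _ (by positivity) (by positivity)]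
  ring

lemma sum_range_one_div_mul_two_mul_sub_one (n : ℕ) :
    ∑ k ∈ range n, 1 / (((k : ℝ) + 1) * (2 * ((k : ℝ) + 1) - 1))
      = 2 * ((harmonic (2 * n) : ℝ) - harmonic n) := by
  induction n with
  | zero => simp
  | succ n ih =>
    rw [sum_range_succ, ih, one_div_natSucc_mul_two_mul_sub_one,
      show 2 * (n + 1) = 2 * n + 1 + 1 by ring, harmonic_succ, harmonic_succ, harmonic_succ]
    push_cast
    field_simp
    ring

lemma tendsto_harmonic_two_mul_sub_harmonic :
    Tendsto (fun n : ℕ => (harmonic (2 * n) : ℝ) - harmonic n) atTop (𝓝 (log 2)) := by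
  have h_double : Tendsto (fun n : ℕ => (harmonic (2 * n) : ℝ) - log (2 * n)) atTop
      (𝓝 eulerMascheroniConstant) := by
    simpa [Function.comp_def] using
      tendsto_harmonic_sub_log.comp (tendsto_id.const_mul_atTop' two_pos)
  have h_log : (fun n : ℕ => log (2 * n) - log n) =ᶠ[atTop] fun _ => log 2 := by
    filter_upwards [eventually_ne_atTop 0] with n hn
    rw [log_mul two_ne_zero (Nat.cast_ne_zero.mpr hn)]
    ring
  have h_sum := (h_double.sub tendsto_harmonic_sub_log).add (tendsto_const_nhds.congr' h_log.symm)
  rw [sub_self, zero_add] at h_sum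
  exact h_sum.congr fun n => by ring

lemma hasSum_one_div_mul_two_mul_sub_one :
    HasSum (fun k : ℕ => 1 / (((k : ℝ) + 1) * (2 * ((k : ℝ) + 1) - 1))) (2 * log 2) := by
  rw [hasSum_iff_tendsto_nat_of_nonneg fun k => by
    rw [show 2 * ((k : ℝ) + 1) - 1 = 2 * k + 1 by ring]; positivity]
  simp only [sum_range_one_div_mul_two_mul_sub_one]
  exact tendsto_harmonic_two_mul_sub_harmonic.const_mul 2

lemma hasSum_pow_div_mul_two_mul_sub_one_of_abs_lt_one {t : ℝ} (ht : |t| < 1) :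
    HasSum (fun k : ℕ => t ^ (2 * (k + 1)) / (((k : ℝ) + 1) * (2 * ((k : ℝ) + 1) - 1)))
      ((1 + t) * log (1 + t) + (1 - t) * log (1 - t)) := by
  have ht2 : |t ^ 2| < 1 := by rwa [abs_pow, sq_lt_one_iff_abs_lt_one, abs_abs]
  have h_sum := ((hasSum_log_sub_log_of_abs_lt_one ht).mul_left t).add
    (hasSum_pow_div_log_of_abs_lt_one ht2).neg
  obtain ⟨h_pos, h_neg⟩ : 1 + t ≠ 0 ∧ 1 - t ≠ 0 := by
    constructor <;> linarith [abs_lt.mp ht]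
  rw [show (1 + t) * log (1 + t) + (1 - t) * log (1 - t)
      = t * (log (1 + t) - log (1 - t)) + - -log (1 - t ^ 2) by
    rw [show (1 : ℝ) - t ^ 2 = (1 + t) * (1 - t) by ring, log_mul h_pos h_neg]
    ring]
  refine h_sum.congr_fun fun k => ?_
  rw [div_eq_mul_one_div, one_div_natSucc_mul_two_mul_sub_one]
  ring

lemma hasSum_pow_div_mul_two_mul_sub_one {t : ℝ} (ht : |t| ≤ 1) :
    HasSum (fun k : ℕ => t ^ (2 * (k + 1)) / (((k : ℝ) + 1) * (2 * ((k : ℝ) + 1) - 1)))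
      ((1 + t) * log (1 + t) + (1 - t) * log (1 - t)) := by
  rcases ht.lt_or_eq with ht | ht
  · exact hasSum_pow_div_mul_two_mul_sub_one_of_abs_lt_one ht
  · have h_val : (1 + t) * log (1 + t) + (1 - t) * log (1 - t) = 2 * log 2 := by
      rcases (abs_eq zero_le_one).mp ht with rfl | rfl <;> norm_num
    have h_pow (k : ℕ) : t ^ (2 * (k + 1)) = 1 := by
      rw [← pow_abs_two_mul, ht, one_pow]
    simpa only [h_val, h_pow, one_div] using hasSum_one_div_mul_two_mul_sub_one

lemma mul_log_two_mul (x : ℝ) : x * log (2 * x) = x * log 2 + x * log x := by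
  rcases eq_or_ne x 0 with rfl | hx
  · simp
  · rw [log_mul two_ne_zero hx]
    ring

theorem stmt_0 (x : ℝ) (hx0 : 0 ≤ x) (hx1 : x ≤ 1) :
    h2 x = 1 - (1 / (2 * Real.log 2)) *
      ∑' k : ℕ, (1 - 2 * x) ^ (2 * (k + 1)) / (((k : ℝ) + 1) * (2 * ((k : ℝ) + 1) - 1)) := by
  have ht : |1 - 2 * x| ≤ 1 := abs_le.mpr ⟨by linarith, by linarith⟩
  rw [(hasSum_pow_div_mul_two_mul_sub_one ht).tsum_eq,
    show 1 + (1 - 2 * x) = 2 * (1 - x) by ring, show 1 - (1 - 2 * x) = 2 * x by ring,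
    mul_assoc, mul_log_two_mul, mul_assoc, mul_log_two_mul]
  have hlog2 : log 2 ≠ 0 := (log_pos one_lt_two).ne'
  simp only [h2, logb]
  field_simp
  ring
end

section
/- For all u with 0 ≤ u ≤ 1, (1/(2 ln 2)) ∑_{k=1}^∞ u^k/(k(2k-1)) = 1 - h₂((1-√u)/2). -/
/-!
With `s = √u`, partial fractions `1 / (k (2k - 1)) = 2 / (2k - 1) - 1 / k` split the series
into the Taylor series of `s (log (1 + s) - log (1 - s))` and of `log (1 - s²)`, so for `|s| < 1`
it sums to `(1 + s) log (1 + s) + (1 - s) log (1 - s)`, which is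
`2 log 2 · (1 - h₂ ((1 - s) / 2))`.
The series converges uniformly on `[-1, 1]`, so the identity extends to `s = 1` by continuity.
-/

open Real Set

noncomputable def mulLogPair (s : ℝ) : ℝ :=
  (1 + s) * log (1 + s) + (1 - s) * log (1 - s)

lemma continuous_mulLogPair : Continuous mulLogPair :=
  (continuous_mul_log.comp (continuous_const.add continuous_id)).add
    (continuous_mul_log.comp (continuous_const.sub continuous_id))

lemma mul_two_mul_sub_one_pos (k : ℕ) : 0 < ((k : ℝ) + 1) * (2 * ((k : ℝ) + 1) - 1) := by
  have hk : (0 : ℝ) ≤ k := k.cast_nonneg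
  nlinarith

lemma hasSum_sq_pow_div_of_abs_lt_one {s : ℝ} (hs : |s| < 1) :
    HasSum (fun k : ℕ => (s ^ 2) ^ (k + 1) / (((k : ℝ) + 1) * (2 * ((k : ℝ) + 1) - 1)))
      (mulLogPair s) := by
  have hs2 : |s ^ 2| < 1 := by rw [abs_pow]; exact pow_lt_one₀ (abs_nonneg s) hs two_ne_zero
  have hsum := ((hasSum_log_sub_log_of_abs_lt_one hs).mul_left s).sub
    (hasSum_pow_div_log_of_abs_lt_one hs2)
  have hlog : log (1 - s ^ 2) = log (1 - s) + log (1 + s) := by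
    rw [show 1 - s ^ 2 = (1 - s) * (1 + s) by ring]
    exact log_mul (by linarith [abs_lt.1 hs]) (by linarith [abs_lt.1 hs])
  rw [sub_neg_eq_add, hlog] at hsum
  have hterm : (fun k : ℕ => (s ^ 2) ^ (k + 1) / (((k : ℝ) + 1) * (2 * ((k : ℝ) + 1) - 1)))
      = fun k : ℕ => s * (2 * (1 / (2 * (k : ℝ) + 1)) * s ^ (2 * k + 1))
        - (s ^ 2) ^ (k + 1) / ((k : ℝ) + 1) := by
    funext k
    rw [← pow_mul, show 2 * (k + 1) = (2 * k + 1) + 1 by ring, pow_succ,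
      show 2 * ((k : ℝ) + 1) - 1 = 2 * k + 1 by ring]
    field_simp
    ring
  rw [hterm, show mulLogPair s = s * (log (1 + s) - log (1 - s)) + (log (1 - s) + log (1 + s)) by
    unfold mulLogPair; ring]
  exact hsum

lemma summable_one_div_mul_two_mul_sub_one :
    Summable (fun k : ℕ => 1 / (((k : ℝ) + 1) * (2 * ((k : ℝ) + 1) - 1))) := by
  have hsq : Summable (fun k : ℕ => 1 / ((k : ℝ) + 1) ^ 2) := by
    simpa using (summable_nat_add_iff 1).2 (summable_one_div_nat_pow.2 one_lt_two)
  refine hsq.of_nonneg_of_le (fun k => (one_div_pos.2 (mul_two_mul_sub_one_pos k)).le)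
    (fun k => ?_)
  gcongr
  nlinarith [(k.cast_nonneg : (0 : ℝ) ≤ k)]

lemma hasSum_sq_pow_div {s : ℝ} (hs : |s| ≤ 1) :
    HasSum (fun k : ℕ => (s ^ 2) ^ (k + 1) / (((k : ℝ) + 1) * (2 * ((k : ℝ) + 1) - 1)))
      (mulLogPair s) := by
  set f : ℕ → ℝ → ℝ :=
    fun k t => (t ^ 2) ^ (k + 1) / (((k : ℝ) + 1) * (2 * ((k : ℝ) + 1) - 1))
  have hbound : ∀ k, ∀ t ∈ Icc (-1 : ℝ) 1,
      ‖f k t‖ ≤ 1 / (((k : ℝ) + 1) * (2 * ((k : ℝ) + 1) - 1)) := by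
    intro k t ht
    have ht2 : t ^ 2 ≤ 1 := by nlinarith [ht.1, ht.2]
    have hpos := mul_two_mul_sub_one_pos k
    rw [norm_div, norm_pow, Real.norm_of_nonneg (sq_nonneg t), Real.norm_of_nonneg hpos.le]
    gcongr
    exact pow_le_one₀ (sq_nonneg t) ht2
  have hcont : ContinuousOn (fun t => ∑' k, f k t) (Icc (-1) 1) :=
    continuousOn_tsum (fun k => by fun_prop) summable_one_div_mul_two_mul_sub_one hbound
  have heq : EqOn (fun t => ∑' k, f k t) mulLogPair (Icc (-1) 1) :=
    EqOn.of_subset_closure (fun t ht => (hasSum_sq_pow_div_of_abs_lt_one (abs_lt.2 ht)).tsum_eq)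
      hcont continuous_mulLogPair.continuousOn Ioo_subset_Icc_self
      (closure_Ioo (by norm_num)).ge
  have hsummable := summable_one_div_mul_two_mul_sub_one.of_norm_bounded
    (fun k => hbound k s (abs_le.1 hs))
  exact hsummable.hasSum_iff.2 (heq (abs_le.1 hs))

lemma mul_log_div_two (x : ℝ) : x * log (x / 2) = x * log x - x * log 2 := by
  rcases eq_or_ne x 0 with rfl | hx
  · simp
  · rw [log_div hx two_ne_zero]
    ring

lemma one_sub_h2_one_sub_div_two (s : ℝ) :
    1 - h2 ((1 - s) / 2) = mulLogPair s / (2 * log 2) := by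
  have hlog2 : log 2 ≠ 0 := (log_pos one_lt_two).ne'
  have hminus := mul_log_div_two (1 - s)
  have hplus := mul_log_div_two (1 + s)
  rw [h2, logb, logb, show 1 - (1 - s) / 2 = (1 + s) / 2 by ring, mulLogPair]
  field_simp
  linear_combination hminus + hplus

theorem stmt_1 (u : ℝ) (hu0 : 0 ≤ u) (hu1 : u ≤ 1) :
    (1 / (2 * Real.log 2)) *
      ∑' k : ℕ, u ^ (k + 1) / (((k : ℝ) + 1) * (2 * ((k : ℝ) + 1) - 1))
    = 1 - h2 ((1 - Real.sqrt u) / 2) := by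
  have hs : |√u| ≤ 1 := by rw [abs_of_nonneg (sqrt_nonneg u)]; exact sqrt_le_one.2 hu1
  rw [one_sub_h2_one_sub_div_two, ← (hasSum_sq_pow_div hs).tsum_eq, sq_sqrt hu0,
    one_div_mul_eq_div]
end

section
/- For every real l ≥ 0, h₂(1/(1+eˡ)) ≥ 1 - tanh²(l/2). -/
open Real Filter Topology Finset

/-- partial sums identity: ∑_{k<n} 1/((k+1)(2k+1)) = 2 (H_{2n} - H_n) -/
lemma aux_partial (n : ℕ) :
    ∑ k ∈ Finset.range n, (1 : ℝ) / ((k + 1) * (2 * k + 1)) =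
      2 * ((harmonic (2 * n) : ℝ) - (harmonic n : ℝ)) := by
  induction n with
  | zero => simp
  | succ n ih =>
    rw [Finset.sum_range_succ, ih]
    have h2n : 2 * (n + 1) = (2 * n + 1) + 1 := by ring
    rw [h2n, harmonic_succ, harmonic_succ, harmonic_succ]
    push_cast
    have h1 : ((2 : ℝ) * n + 1) ≠ 0 := by positivity
    have h2 : ((2 : ℝ) * n + 1 + 1) ≠ 0 := by positivity
    have h3 : ((n : ℝ) + 1) ≠ 0 := by positivity
    field_simp
    ring

lemma aux_summable : Summable (fun k : ℕ => (1 : ℝ) / ((k + 1) * (2 * k + 1))) := by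
  have h : Summable (fun k : ℕ => (1 : ℝ) / (k + 1) ^ 2) := by
    have := Real.summable_one_div_nat_pow.mpr (le_refl 2)
    exact_mod_cast (summable_nat_add_iff 1).mpr this
  apply Summable.of_nonneg_of_le (fun k => by positivity) _ h
  intro k
  apply div_le_div_of_nonneg_left (by norm_num) (by positivity)
  have hk : (0:ℝ) ≤ (k:ℝ) := Nat.cast_nonneg k
  nlinarith

/-- ∑ 1/((k+1)(2k+1)) = 2 log 2 -/
lemma aux_hasSum_const : HasSum (fun k : ℕ => (1 : ℝ) / ((k + 1) * (2 * k + 1)))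
    (2 * Real.log 2) := by
  rw [aux_summable.hasSum_iff_tendsto_nat]
  have hmul : Tendsto (fun n : ℕ => 2 * n) atTop atTop :=
    Filter.tendsto_atTop_atTop.mpr (fun b => ⟨b, fun a ha => by omega⟩)
  have hA : Tendsto (fun n : ℕ => (harmonic (2 * n) : ℝ) - Real.log ((2 * n : ℕ) : ℝ)) atTop
      (𝓝 Real.eulerMascheroniConstant) := Real.tendsto_harmonic_sub_log.comp hmul
  have hB := Real.tendsto_harmonic_sub_log
  have hdiff : Tendsto (fun n : ℕ => (harmonic (2 * n) : ℝ) - (harmonic n : ℝ)) atTop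
      (𝓝 (Real.log 2)) := by
    have h0 : Tendsto (fun n : ℕ =>
        ((harmonic (2 * n) : ℝ) - Real.log ((2 * n : ℕ) : ℝ)) - ((harmonic n : ℝ) - Real.log n)
          + Real.log 2) atTop (𝓝 (Real.eulerMascheroniConstant -
            Real.eulerMascheroniConstant + Real.log 2)) :=
      Tendsto.add_const _ (hA.sub hB)
    rw [sub_self, zero_add] at h0
    apply h0.congr'
    filter_upwards [eventually_gt_atTop 0] with n hn
    have hn' : (0 : ℝ) < n := by exact_mod_cast hn
    rw [show ((2 * n : ℕ) : ℝ) = 2 * (n : ℝ) by push_cast; ring,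
      Real.log_mul (by norm_num) hn'.ne']
    ring
  have := hdiff.const_mul (2 : ℝ)
  apply this.congr
  intro n
  rw [aux_partial]

/-- power series for (1+t)log(1+t) + (1-t)log(1-t) -/
lemma aux_hasSum_f {t : ℝ} (h : |t| < 1) (ht1 : t < 1) (ht0 : -1 < t) :
    HasSum (fun k : ℕ => t ^ (2 * k + 2) * (1 / ((k + 1) * (2 * k + 1))))
      ((1 + t) * Real.log (1 + t) + (1 - t) * Real.log (1 - t)) := by
  have hA := (hasSum_log_sub_log_of_abs_lt_one h).mul_left t
  have ht2 : |t ^ 2| < 1 := by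
    rw [abs_pow, sq_abs]
    nlinarith [abs_nonneg t, abs_lt.mpr ⟨ht0, ht1⟩]
  have hB := hasSum_pow_div_log_of_abs_lt_one ht2
  have hC := hA.sub hB
  have hlog : Real.log (1 - t ^ 2) = Real.log (1 + t) + Real.log (1 - t) := by
    rw [show (1 : ℝ) - t ^ 2 = (1 + t) * (1 - t) by ring,
      Real.log_mul (by linarith) (by linarith)]
  have hval : t * (Real.log (1 + t) - Real.log (1 - t)) - -Real.log (1 - t ^ 2) =
      (1 + t) * Real.log (1 + t) + (1 - t) * Real.log (1 - t) := by
    rw [hlog]; ring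
  rw [hval] at hC
  apply hC.congr_fun
  intro k
  have h1 : ((k : ℝ) + 1) ≠ 0 := by positivity
  have h2 : (2 * (k : ℝ) + 1) ≠ 0 := by positivity
  have hpow : (t ^ 2) ^ (k + 1) = t ^ (2 * k + 2) := by
    rw [← pow_mul]; ring_nf
  rw [hpow]
  push_cast
  field_simp
  ring

/-- key inequality -/
lemma aux_key {t : ℝ} (ht0 : 0 ≤ t) (ht1 : t < 1) :
    (1 + t) * Real.log (1 + t) + (1 - t) * Real.log (1 - t) ≤ 2 * Real.log 2 * t ^ 2 := by
  have habs : |t| < 1 := by rw [abs_of_nonneg ht0]; exact ht1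
  have hf := aux_hasSum_f habs ht1 (by linarith)
  have hc := aux_hasSum_const.mul_left (t ^ 2)
  have hle : ∀ k : ℕ, t ^ (2 * k + 2) * (1 / ((k + 1 : ℝ) * (2 * k + 1))) ≤
      t ^ 2 * (1 / ((k + 1 : ℝ) * (2 * k + 1))) := by
    intro k
    apply mul_le_mul_of_nonneg_right _ (by positivity)
    calc t ^ (2 * k + 2) = t ^ 2 * t ^ (2 * k) := by ring
      _ ≤ t ^ 2 * 1 := by
          apply mul_le_mul_of_nonneg_left _ (by positivity)
          exact pow_le_one₀ ht0 ht1.le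
      _ = t ^ 2 := by ring
  have := hasSum_le hle hf hc
  linarith [this]

theorem stmt_4 (l : ℝ) (hl : 0 ≤ l) :
    h2 (1 / (1 + Real.exp l)) ≥ 1 - Real.tanh (l / 2) ^ 2 := by
  set t := Real.tanh (l / 2) with htdef
  have hexp : Real.exp l = Real.exp (l / 2) * Real.exp (l / 2) := by
    rw [← Real.exp_add]; ring_nf
  have hepos : (0 : ℝ) < Real.exp (l / 2) := Real.exp_pos _
  have hcosh : (0 : ℝ) < Real.cosh (l / 2) := Real.cosh_pos _
  -- t = (e^l - 1)/(e^l + 1)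
  have ht : t = (Real.exp l - 1) / (Real.exp l + 1) := by
    rw [htdef, Real.tanh_eq_sinh_div_cosh, Real.sinh_eq, Real.cosh_eq, hexp]
    rw [Real.exp_neg]
    rw [div_eq_div_iff (by positivity) (by positivity)]
    field_simp
  have hel : (1 : ℝ) ≤ Real.exp l := by
    rw [show (1 : ℝ) = Real.exp 0 by simp]; exact Real.exp_le_exp.mpr hl
  have ht0 : 0 ≤ t := by
    rw [ht]; apply div_nonneg (by linarith) (by positivity)
  have ht1 : t < 1 := by
    rw [ht, div_lt_one (by positivity)]; linarith
  have hp : 1 / (1 + Real.exp l) = (1 - t) / 2 := by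
    rw [ht]
    have h1 : Real.exp l + 1 ≠ 0 := by positivity
    field_simp
    ring
  have hq : (1 : ℝ) - (1 - t) / 2 = (1 + t) / 2 := by ring
  have hL2 : (0 : ℝ) < Real.log 2 := Real.log_pos (by norm_num)
  have hkey := aux_key ht0 ht1
  have hlogp : Real.log ((1 - t) / 2) = Real.log (1 - t) - Real.log 2 :=
    Real.log_div (by linarith) (by norm_num)
  have hlogq : Real.log ((1 + t) / 2) = Real.log (1 + t) - Real.log 2 :=
    Real.log_div (by linarith) (by norm_num)
  have hh2 : h2 (1 / (1 + Real.exp l)) =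
      1 - ((1 + t) * Real.log (1 + t) + (1 - t) * Real.log (1 - t)) / (2 * Real.log 2) := by
    rw [hp]
    unfold h2
    rw [hq, Real.logb, Real.logb, hlogp, hlogq]
    field_simp
    ring
  rw [hh2, ge_iff_le]
  have h1 : ((1 + t) * Real.log (1 + t) + (1 - t) * Real.log (1 - t)) / (2 * Real.log 2)
      ≤ t ^ 2 := by
    rw [div_le_iff₀ (by positivity)]
    linarith
  linarith
end

section
/- For all x with 0 ≤ x ≤ 1, h₂⁻¹(x) ≥ (1/2)(1 - √(2 ln 2 · (1-x))), where h₂⁻¹ : [0,1] → [0,1/2] is the inverse of the binary entropy function restricted to [0,1/2]. -/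
/-!
Pinsker's inequality for a Bernoulli(p) law against the fair coin,
`binEntropy p + 2 (p - 1/2)² ≤ log 2` for `p ∈ [0, 1]`: the left side is concave (its second
derivative is `4 - 1 / (p (1 - p)) ≤ 0`) and symmetric under `p ↦ 1 - p`, so it is largest at `1/2`.
For `p = h₂⁻¹(x)` the entropy in nats is `x log 2`, which gives `(1 - 2p)² ≤ 2 log 2 (1 - x)`.
-/

open Real Set

lemma h2_eq_binEntropy_div_log_two (x : ℝ) : h2 x = binEntropy x / log 2 := by
  simp only [h2, binEntropy, logb, log_inv]
  ring

lemma concaveOn_binEntropy_add_two_mul_sq :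
    ConcaveOn ℝ (Icc 0 1) fun p ↦ binEntropy p + 2 * (p - 2⁻¹) ^ 2 := by
  refine concaveOn_of_hasDerivWithinAt2_nonpos (convex_Icc 0 1) (by fun_prop)
    (f' := fun p ↦ log (1 - p) - log p + 4 * (p - 2⁻¹))
    (f'' := fun p ↦ -(1 - p)⁻¹ - p⁻¹ + 4) ?_ ?_ ?_ <;>
  rw [interior_Icc] <;> rintro p ⟨hp0, hp1⟩
  · have hsq : HasDerivAt (fun p : ℝ ↦ 2 * (p - 2⁻¹) ^ 2) (4 * (p - 2⁻¹)) p := by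
      refine ((((hasDerivAt_id p).sub_const 2⁻¹).fun_pow 2).const_mul 2).congr_deriv ?_
      simp only [id, Nat.cast_ofNat]
      ring
    exact ((hasDerivAt_binEntropy hp0.ne' hp1.ne).add hsq).hasDerivWithinAt
  · have hlog_one_sub : HasDerivAt (fun p ↦ log (1 - p)) (-(1 - p)⁻¹) p := by
      simpa [neg_div] using ((hasDerivAt_id p).const_sub 1).log (by simp only [id]; linarith)
    have hlin : HasDerivAt (fun p : ℝ ↦ 4 * (p - 2⁻¹)) 4 p := by
      simpa using ((hasDerivAt_id p).sub_const 2⁻¹).const_mul 4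
    exact ((hlog_one_sub.sub (hasDerivAt_log hp0.ne')).add hlin).hasDerivWithinAt
  · have h1p : 0 < 1 - p := by linarith
    rw [show -(1 - p)⁻¹ - p⁻¹ + 4 = -(2 * p - 1) ^ 2 / (p * (1 - p)) by field_simp; ring]
    exact div_nonpos_of_nonpos_of_nonneg (neg_nonpos.2 (sq_nonneg _)) (by positivity)

lemma binEntropy_add_two_mul_sq_le_log_two {p : ℝ} (hp0 : 0 ≤ p) (hp1 : p ≤ 1) :
    binEntropy p + 2 * (p - 2⁻¹) ^ 2 ≤ log 2 := by
  have hmid := concaveOn_binEntropy_add_two_mul_sq.2 (mem_Icc.2 ⟨hp0, hp1⟩)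
    (mem_Icc.2 ⟨sub_nonneg.2 hp1, sub_le_self 1 hp0⟩) (inv_nonneg.2 zero_le_two)
    (inv_nonneg.2 zero_le_two) (by norm_num)
  simp only [smul_eq_mul, binEntropy_one_sub] at hmid
  rw [show 2⁻¹ * p + 2⁻¹ * (1 - p) = (2⁻¹ : ℝ) by ring, binEntropy_two_inv] at hmid
  linarith

theorem stmt_5 (h2inv : ℝ → ℝ)
    (hspec : ∀ y, 0 ≤ y → y ≤ 1 →
      0 ≤ h2inv y ∧ h2inv y ≤ 1 / 2 ∧ h2 (h2inv y) = y)
    (x : ℝ) (hx0 : 0 ≤ x) (hx1 : x ≤ 1) :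
    h2inv x ≥ (1 / 2) * (1 - Real.sqrt (2 * Real.log 2 * (1 - x))) := by
  obtain ⟨hp0, hp2, hpx⟩ := hspec x hx0 hx1
  have hbin : binEntropy (h2inv x) = x * log 2 := by
    rwa [h2_eq_binEntropy_div_log_two, div_eq_iff (log_pos one_lt_two).ne'] at hpx
  have hsq : (1 - 2 * h2inv x) ^ 2 ≤ 2 * log 2 * (1 - x) := by
    nlinarith [binEntropy_add_two_mul_sq_le_log_two hp0 (by linarith : h2inv x ≤ 1)]
  linarith [le_abs_self (1 - 2 * h2inv x), abs_le_sqrt hsq]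
end

section
/- For all u with 0 ≤ u ≤ 1, (1 - 2 h₂⁻¹(u))² ≤ 2 ln 2 · (1-u). -/
open Real

lemma aux_phi (x : ℝ) (hx0 : 0 < x) (hx : x ≤ 1/2) :
    2 - 4*x ≤ Real.log (1-x) - Real.log x := by
  set φ : ℝ → ℝ := fun t => Real.log (1-t) - Real.log t + 4*t with hφ
  have hd : ∀ t : ℝ, 0 < t → t < 1 →
      HasDerivAt φ (-(1/(1-t)) - 1/t + 4) t := by
    intro t ht0 ht1
    have h1 : HasDerivAt (fun t : ℝ => Real.log (1-t)) (-(1/(1-t))) t := by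
      have := ((hasDerivAt_id t).const_sub 1).log (by simp; linarith)
      simpa [div_eq_mul_inv] using this
    have h2 : HasDerivAt (fun t : ℝ => Real.log t) (1/t) t := by
      simpa [one_div] using Real.hasDerivAt_log (ne_of_gt ht0)
    have h3 : HasDerivAt (fun t : ℝ => 4*t) 4 t := by
      simpa using (hasDerivAt_id t).const_mul 4
    exact (h1.sub h2).add h3
  have key : AntitoneOn φ (Set.Icc x (1/2)) := by
    apply antitoneOn_of_deriv_nonpos (convex_Icc _ _)
    · apply ContinuousOn.add
      · apply ContinuousOn.sub
        · apply ContinuousOn.log (by fun_prop)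
          intro t ht
          simp only [Set.mem_Icc] at ht
          have : (0:ℝ) < 1 - t := by linarith [ht.2]
          linarith
        · apply ContinuousOn.log (by fun_prop)
          intro t ht
          simp only [Set.mem_Icc] at ht
          have : 0 < t := lt_of_lt_of_le hx0 ht.1
          exact ne_of_gt this
      · fun_prop
    · rw [interior_Icc]
      intro t ht
      rw [Set.mem_Ioo] at ht
      exact (hd t (lt_trans hx0 ht.1) (by linarith [ht.2])).differentiableAt.differentiableWithinAt
    · rw [interior_Icc]
      intro t ht
      rw [Set.mem_Ioo] at ht
      have ht0 : 0 < t := lt_trans hx0 ht.1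
      have ht1 : t < 1 := by linarith [ht.2]
      rw [(hd t ht0 ht1).deriv]
      have hpos : 0 < t * (1-t) := mul_pos ht0 (by linarith)
      have h1t : (1:ℝ)-t ≠ 0 := by linarith
      have : -(1/(1-t)) - 1/t + 4 = -((1-2*t)^2 / (t*(1-t))) := by
        field_simp
        ring
      rw [this]
      simp only [neg_nonpos]
      positivity
  have := key (Set.mem_Icc.mpr ⟨le_refl x, hx⟩)
    (Set.mem_Icc.mpr ⟨hx, le_refl _⟩) hx
  have hval : φ (1/2) = 2 := by
    simp only [hφ]
    norm_num
  rw [hval] at this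
  simp only [hφ] at this
  linarith

lemma aux_key_s6 (x : ℝ) (hx0 : 0 ≤ x) (hx : x ≤ 1/2) :
    (1 - 2*x)^2 ≤ 2 * Real.log 2 - 2 * Real.binEntropy x := by
  rcases eq_or_lt_of_le hx0 with h | h
  · subst h
    simp only [Real.binEntropy_zero]
    have := Real.log_two_gt_d9
    norm_num
    linarith
  · set g : ℝ → ℝ := fun t => Real.binEntropy t + 2*(1/2 - t)^2 with hg
    have hd : ∀ t : ℝ, 0 < t → t < 1 →
        HasDerivAt g ((Real.log (1-t) - Real.log t) + (4*t - 2)) t := by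
      intro t ht0 ht1
      have h1 := Real.hasDerivAt_binEntropy (ne_of_gt ht0) (ne_of_lt ht1)
      have h2 : HasDerivAt (fun t : ℝ => 2*(1/2 - t)^2) (4*t - 2) t := by
        have : HasDerivAt (fun t : ℝ => 2*(1/2 - t)^2)
            (2*((2:ℕ)*(1/2 - t)^((2:ℕ)-1)*(-1))) t :=
          (((hasDerivAt_id t).const_sub (1/2)).pow 2).const_mul 2
        convert this using 1
        push_cast
        ring
      exact h1.add h2
    have key : MonotoneOn g (Set.Icc x (1/2)) := by
      apply monotoneOn_of_deriv_nonneg (convex_Icc _ _)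
      · exact (Real.binEntropy_continuous.continuousOn).add (by fun_prop)
      · rw [interior_Icc]
        intro t ht
        rw [Set.mem_Ioo] at ht
        exact (hd t (lt_trans h ht.1) (by linarith [ht.2])).differentiableAt.differentiableWithinAt
      · rw [interior_Icc]
        intro t ht
        rw [Set.mem_Ioo] at ht
        have ht0 : 0 < t := lt_trans h ht.1
        have ht1 : t < 1 := by linarith [ht.2]
        rw [(hd t ht0 ht1).deriv]
        have := aux_phi t ht0 (le_of_lt ht.2)
        linarith
    have := key (Set.mem_Icc.mpr ⟨le_refl x, hx⟩)
      (Set.mem_Icc.mpr ⟨hx, le_refl _⟩) hx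
    have hval : g (1/2) = Real.log 2 := by
      simp only [hg]
      rw [show (1:ℝ)/2 = 2⁻¹ by norm_num, Real.binEntropy_two_inv]
      norm_num
    rw [hval] at this
    simp only [hg] at this
    nlinarith [this]

theorem stmt_6 (h2inv : ℝ → ℝ)
    (hspec : ∀ y, 0 ≤ y → y ≤ 1 →
      0 ≤ h2inv y ∧ h2inv y ≤ 1 / 2 ∧ h2 (h2inv y) = y)
    (u : ℝ) (hu0 : 0 ≤ u) (hu1 : u ≤ 1) :
    (1 - 2 * h2inv u) ^ 2 ≤ 2 * Real.log 2 * (1 - u) := by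
  obtain ⟨hx0, hx, hval⟩ := hspec u hu0 hu1
  set x := h2inv u with hxdef
  have hlog2 : (0:ℝ) < Real.log 2 := Real.log_pos (by norm_num)
  have hconv : Real.binEntropy x = u * Real.log 2 := by
    rw [← hval]
    unfold h2 Real.binEntropy Real.logb
    rw [Real.log_inv, Real.log_inv]
    field_simp
    ring
  have := aux_key_s6 x hx0 hx
  rw [hconv] at this
  nlinarith [this]
end

section
/- Suppose real numbers R, C, P_b, ε ∈ [0,1] and g₁ ∈ (0,1) satisfy h₂(P_b) ≥ R - C + (1-R)(1 - h₂((1 - g₁^{a_R/2})/2)), R ≥ (1-ε)C, a_R ≥ 2, and C + h₂(P_b) < 1. Then a_R ≥ 2 ln(1/(1 - 2h₂⁻¹((1-C-h₂(P_b))/(1-(1-ε)C)))) / ln(1/g₁). -/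
lemma h2_eq (x : ℝ) : h2 x = Real.binEntropy x / Real.log 2 := by
  simp [h2, Real.binEntropy, Real.logb, Real.log_inv]
  ring

theorem stmt_16 (R C Pb ε g1 aR : ℝ)
    (hR0 : 0 ≤ R) (hR1 : R ≤ 1) (hC0 : 0 ≤ C) (hC1 : C ≤ 1)
    (hPb0 : 0 ≤ Pb) (hPb1 : Pb ≤ 1) (hε0 : 0 ≤ ε) (hε1 : ε ≤ 1)
    (hg10 : 0 < g1) (hg11 : g1 < 1)
    (h2inv : ℝ → ℝ)
    (hspec : ∀ y, 0 ≤ y → y ≤ 1 →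
      0 ≤ h2inv y ∧ h2inv y ≤ 1 / 2 ∧ h2 (h2inv y) = y)
    (hmain : h2 Pb ≥ R - C + (1 - R) * (1 - h2 ((1 - g1 ^ (aR / 2)) / 2)))
    (hRC : R ≥ (1 - ε) * C) (haR : aR ≥ 2) (hlt : C + h2 Pb < 1) :
    aR ≥ 2 * Real.log (1 / (1 - 2 * h2inv ((1 - C - h2 Pb) / (1 - (1 - ε) * C)))) /
      Real.log (1 / g1) := by
  have hlog2 : (0:ℝ) < Real.log 2 := Real.log_pos (by norm_num)
  have hPbh : 0 ≤ h2 Pb := by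
    rw [h2_eq]
    exact div_nonneg (Real.binEntropy_nonneg hPb0 hPb1) hlog2.le
  have hεC : (1 - ε) * C ≤ C := by nlinarith
  have hden : 0 < 1 - (1 - ε) * C := by nlinarith
  set y : ℝ := (1 - C - h2 Pb) / (1 - (1 - ε) * C) with hy
  have hnum : 0 < 1 - C - h2 Pb := by linarith
  have hy0 : 0 ≤ y := div_nonneg hnum.le hden.le
  have hy1 : y ≤ 1 := by
    rw [hy, div_le_one hden]; linarith
  obtain ⟨hx0, hx12, hxval⟩ := hspec y hy0 hy1
  set x : ℝ := h2inv y with hxdef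
  set g : ℝ := g1 ^ (aR / 2) with hg
  have hgpos : 0 < g := Real.rpow_pos_of_pos hg10 _
  have hg1 : g < 1 := Real.rpow_lt_one hg10.le hg11 (by linarith)
  set z : ℝ := (1 - g) / 2 with hz
  have hz0 : 0 ≤ z := by rw [hz]; linarith
  have hz12 : z ≤ 1 / 2 := by rw [hz]; linarith
  have hRlt : R < 1 := by
    rcases lt_or_ge R 1 with h | h
    · exact h
    · have : R = 1 := le_antisymm hR1 h
      subst this
      simp at hmain
      linarith
  have h1 : (1 - R) * h2 z ≥ 1 - C - h2 Pb := by nlinarith [hmain]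
  have hzpos : 0 < h2 z := by nlinarith
  have h2zy : h2 z ≥ y := by
    rw [hy, ge_iff_le, div_le_iff₀ hden]
    nlinarith
  have hxz : x ≤ z := by
    by_contra hcon
    push_neg at hcon
    have hmono := Real.binEntropy_strictMonoOn
      (Set.mem_Icc.mpr ⟨hz0, by norm_num; linarith⟩)
      (Set.mem_Icc.mpr ⟨hx0, by norm_num; linarith⟩) hcon
    have : h2 z < h2 x := by
      rw [h2_eq, h2_eq]
      exact (div_lt_div_iff_of_pos_right hlog2).mpr hmono
    rw [hxval] at this
    linarith
  have hkey : g ≤ 1 - 2 * x := by rw [hz] at hxz; linarith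
  have h12x : 0 < 1 - 2 * x := lt_of_lt_of_le hgpos hkey
  have hlogle : aR / 2 * Real.log g1 ≤ Real.log (1 - 2 * x) := by
    calc aR / 2 * Real.log g1 = Real.log g := (Real.log_rpow hg10 _).symm
    _ ≤ Real.log (1 - 2 * x) := Real.log_le_log hgpos hkey
  have hlg1 : Real.log g1 < 0 := Real.log_neg hg10 hg11
  have hlig1 : 0 < Real.log (1 / g1) := by
    rw [one_div, Real.log_inv]; linarith
  rw [ge_iff_le, div_le_iff₀ hlig1, one_div, one_div, Real.log_inv, Real.log_inv]
  linarith
end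

section
/- Suppose real numbers p ∈ (0,1), ε ∈ (0,1), P_b ∈ [0,p) and a_R ≥ 1 satisfy P_b ≥ -ε(1-p) + (1-(1-ε)(1-p))(1-p)^{a_R}. Then a_R ≥ ln(1 + (p - P_b)/((1-p)ε + P_b)) / ln(1/(1-p)). -/
/-! With `q = 1 - p`, the hypothesis rearranges to `q ^ a_R * (ε q + p) ≤ ε q + P_b`, i.e.
`(ε q + p) / (ε q + P_b) ≤ (1 / q) ^ a_R`; the bound is the base-`1 / q` logarithm of this. -/

theorem Real.log_div_log_one_div_le_of_mul_rpow_le_one {q x a : ℝ} (hq0 : 0 < q) (hq1 : q < 1)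
    (hx : 0 < x) (h : x * q ^ a ≤ 1) : Real.log x / Real.log (1 / q) ≤ a := by
  have hqa : 0 < q ^ a := Real.rpow_pos_of_pos hq0 a
  rw [Real.log_div_log, Real.logb_le_iff_le_rpow (one_lt_one_div hq0 hq1) hx,
    Real.div_rpow zero_le_one hq0.le, Real.one_rpow, le_div_iff₀ hqa]
  exact h

theorem stmt_17_general (p ε Pb aR : ℝ)
    (hp0 : 0 < p) (hp1 : p < 1) (hε0 : 0 < ε)
    (hPb0 : 0 ≤ Pb)
    (hmain : Pb ≥ -ε * (1 - p) + (1 - (1 - ε) * (1 - p)) * (1 - p) ^ aR) :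
    aR ≥ Real.log (1 + (p - Pb) / ((1 - p) * ε + Pb)) / Real.log (1 / (1 - p)) := by
  have hq0 : 0 < 1 - p := by linarith
  have hden : 0 < (1 - p) * ε + Pb := by positivity
  have hratio : 1 + (p - Pb) / ((1 - p) * ε + Pb) = ((1 - p) * ε + p) / ((1 - p) * ε + Pb) := by
    field_simp
    ring
  rw [hratio]
  refine Real.log_div_log_one_div_le_of_mul_rpow_le_one hq0 (by linarith) (by positivity) ?_
  rw [div_mul_eq_mul_div, div_le_one hden]
  linear_combination hmain

theorem stmt_17 (p ε Pb aR : ℝ)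
    (hp0 : 0 < p) (hp1 : p < 1) (hε0 : 0 < ε) (hε1 : ε < 1)
    (hPb0 : 0 ≤ Pb) (hPbp : Pb < p) (haR : 1 ≤ aR)
    (hmain : Pb ≥ -ε * (1 - p) + (1 - (1 - ε) * (1 - p)) * (1 - p) ^ aR) :
    aR ≥ Real.log (1 + (p - Pb) / ((1 - p) * ε + Pb)) / Real.log (1 / (1 - p)) :=
  stmt_17_general p ε Pb aR hp0 hp1 hε0 hPb0 hmain
end
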